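/- arXiv:1207.2271 — 2 statements merged into one kernel-verified Lean document; each statement's English description precedes it below -/
import Mathlib

section
/- There exists $\alpha\in(0,a_0)$ such that for all $(s,t)\in(-\alpha,0)\times(-\alpha,\alpha)$ one has $d(\Phi(s,t),\gamma)=|\Phi(s,t)-\Gamma(0)|$, and for all $(s,t)\in(L,L+\alpha)\times(-\alpha,\alpha)$ one has $d(\Phi(s,t),\gamma)=|\Phi(s,t)-\Gamma(L)|$; i.e., beyond the endpoints the nearest point of the arc is the respective endpoint. -/
/-!
For `x = Γ s + w` with `s < 0` and `w ⊥ Γ' s`, the function `σ ↦ ‖Γ σ - x‖²` has derivative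
`2 ⟪Γ σ - x, Γ' σ⟫ ≥ 2 (σ - s) (1 - M (σ - s) - M ‖w‖)`, where `M` bounds `‖Γ''‖` near `0`.
Hence it is increasing on `[s, δ]` for small `δ`, so `Γ 0` is at least as close to `x` as every
`Γ σ` with `0 < σ ≤ δ`. By injectivity and compactness `Γ '' [δ, L]` stays at a positive distance
from `Γ 0`, while `x` is as close to `Γ 0` as we like. The endpoint `Γ L` follows by reversing
the curve.
-/

open Set Metric
open scoped RealInnerProductSpace

theorem exists_pos_le_dist_of_injOn {X : Type*} [MetricSpace X] {f : ℝ → X}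
    (hf : Continuous f) {a b c : ℝ} (hinj : InjOn f (Icc a b)) (hac : a < c) :
    ∃ ε > 0, ∀ σ ∈ Icc c b, ε ≤ dist (f σ) (f a) := by
  have hnot : f a ∉ f '' Icc c b := by
    rintro ⟨σ, hσ, heq⟩
    have hσa : σ = a := hinj ⟨hac.le.trans hσ.1, hσ.2⟩ ⟨le_rfl, hac.le.trans (hσ.1.trans hσ.2)⟩ heq
    linarith [hσ.1]
  obtain ⟨ε, hε, hball⟩ := Metric.mem_nhds_iff.mp
    ((isCompact_Icc.image hf).isClosed.isOpen_compl.mem_nhds hnot)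
  exact ⟨ε, hε, fun σ hσ => not_lt.mp fun hlt => hball (mem_ball.mpr hlt) ⟨σ, hσ, rfl⟩⟩

theorem Metric.infDist_eq_dist_of_mem_closure {X : Type*} [PseudoMetricSpace X] {s : Set X}
    {x y : X} (hy : y ∈ closure s) (hle : ∀ z ∈ s, dist x y ≤ dist x z) :
    infDist x s = dist x y :=
  le_antisymm (infDist_closure (x := x) ▸ infDist_le_dist_of_mem hy)
    ((le_infDist (closure_nonempty_iff.mp ⟨y, hy⟩)).mpr hle)

section Taylor

variable {F : Type*} [NormedAddCommGroup F] [NormedSpace ℝ F] {f : ℝ → F} {S : Set ℝ} {M : ℝ}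

theorem norm_deriv_sub_deriv_le (hS : Convex ℝ S) (hf : Differentiable ℝ (deriv f))
    (hM : ∀ x ∈ S, ‖deriv (deriv f) x‖ ≤ M) {a b : ℝ} (ha : a ∈ S) (hb : b ∈ S) :
    ‖deriv f b - deriv f a‖ ≤ M * |b - a| :=
  hS.norm_image_sub_le_of_norm_deriv_le (fun x _ => hf x) hM ha hb

theorem norm_sub_sub_smul_deriv_le (hS : Convex ℝ S) (hf : Differentiable ℝ f)
    (hf' : Differentiable ℝ (deriv f)) (hM : ∀ x ∈ S, ‖deriv (deriv f) x‖ ≤ M) {a b : ℝ}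
    (ha : a ∈ S) (hb : b ∈ S) :
    ‖f b - f a - (b - a) • deriv f a‖ ≤ M * (b - a) ^ 2 := by
  have hsub : uIcc a b ⊆ S := hS.ordConnected.uIcc_subset ha hb
  have hderiv : ∀ τ ∈ uIcc a b, HasDerivWithinAt (fun τ => f τ - τ • deriv f a)
      (deriv f τ - deriv f a) (uIcc a b) τ := fun τ _ =>
    ((hf τ).hasDerivAt.sub ((hasDerivAt_id τ).smul_const (deriv f a) |>.congr_deriv
      (one_smul ℝ _))).hasDerivWithinAt
  have hbound : ∀ τ ∈ uIcc a b, ‖deriv f τ - deriv f a‖ ≤ M * |b - a| := fun τ hτ =>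
    (norm_deriv_sub_deriv_le hS hf' hM ha (hsub hτ)).trans <|
      mul_le_mul_of_nonneg_left (abs_sub_left_of_mem_uIcc hτ)
        ((norm_nonneg _).trans (hM a ha))
  have key := (convex_uIcc a b).norm_image_sub_le_of_norm_hasDerivWithin_le hderiv hbound
    left_mem_uIcc right_mem_uIcc
  calc ‖f b - f a - (b - a) • deriv f a‖
      = ‖(f b - b • deriv f a) - (f a - a • deriv f a)‖ := by rw [sub_smul]; abel_nf
    _ ≤ M * |b - a| * ‖b - a‖ := key
    _ = M * (b - a) ^ 2 := by rw [Real.norm_eq_abs, mul_assoc, abs_mul_abs_self, sq]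

end Taylor

section Curve

variable {E : Type*} [NormedAddCommGroup E] [InnerProductSpace ℝ E] {g : ℝ → E} {S : Set ℝ}
  {M : ℝ}

theorem sub_mul_le_inner_sub_deriv (hS : Convex ℝ S) (hg : Differentiable ℝ g)
    (hg' : Differentiable ℝ (deriv g)) (hM : ∀ x ∈ S, ‖deriv (deriv g) x‖ ≤ M)
    {s σ : ℝ} (hs : s ∈ S) (hσ : σ ∈ S) (hsσ : s ≤ σ) (hunit : ‖deriv g σ‖ = 1) {w : E}
    (hw : ⟪w, deriv g s⟫ = 0) :
    (σ - s) * (1 - M * (σ - s) - M * ‖w‖) ≤ ⟪g σ - (g s + w), deriv g σ⟫ := by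
  set R := g s - g σ - (s - σ) • deriv g σ
  have hdecomp : ⟪g σ - (g s + w), deriv g σ⟫
      = (σ - s) - ⟪R, deriv g σ⟫ - ⟪w, deriv g σ - deriv g s⟫ := by
    have hσσ : ⟪deriv g σ, deriv g σ⟫ = 1 := by
      rw [real_inner_self_eq_norm_sq, hunit, one_pow]
    simp only [R, inner_sub_left, inner_add_left, inner_sub_right, real_inner_smul_left, hσσ, hw]
    ring
  have hR : ⟪R, deriv g σ⟫ ≤ M * (σ - s) ^ 2 := by
    calc ⟪R, deriv g σ⟫ ≤ ‖R‖ * ‖deriv g σ‖ := real_inner_le_norm _ _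
      _ ≤ M * (s - σ) ^ 2 := by
        rw [hunit, mul_one]; exact norm_sub_sub_smul_deriv_le hS hg hg' hM hσ hs
      _ = M * (σ - s) ^ 2 := by ring
  have hW : ⟪w, deriv g σ - deriv g s⟫ ≤ ‖w‖ * (M * (σ - s)) := by
    calc ⟪w, deriv g σ - deriv g s⟫ ≤ ‖w‖ * ‖deriv g σ - deriv g s‖ := real_inner_le_norm _ _
      _ ≤ ‖w‖ * (M * (σ - s)) := by
        gcongr
        simpa [abs_of_nonneg (sub_nonneg.mpr hsσ)] using
          norm_deriv_sub_deriv_le hS hg' hM hs hσ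
  rw [hdecomp]
  nlinarith

theorem monotoneOn_norm_sub_sq (hS : Convex ℝ S) (hg : Differentiable ℝ g)
    (hg' : Differentiable ℝ (deriv g)) (hM : ∀ x ∈ S, ‖deriv (deriv g) x‖ ≤ M)
    (hunit : ∀ σ, ‖deriv g σ‖ = 1) {s b : ℝ} (hsub : Icc s b ⊆ S) {w : E}
    (hw : ⟪w, deriv g s⟫ = 0) (hsmall : M * (b - s + ‖w‖) ≤ 1) :
    MonotoneOn (fun σ => ‖g σ - (g s + w)‖ ^ 2) (Icc s b) := by
  refine monotoneOn_of_hasDerivWithinAt_nonneg (convex_Icc s b)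
    ((hg.continuous.sub continuous_const).norm.pow 2).continuousOn
    (fun σ _ => ((hg σ).hasDerivAt.sub_const (g s + w)).norm_sq.hasDerivWithinAt) ?_
  rw [interior_Icc]
  intro σ hσ
  have hs : s ∈ S := hsub (left_mem_Icc.mpr (hσ.1.trans hσ.2).le)
  have hM0 : 0 ≤ M := (norm_nonneg _).trans (hM s hs)
  have hpos : 0 ≤ (σ - s) * (1 - M * (σ - s) - M * ‖w‖) := by
    apply mul_nonneg (sub_nonneg.mpr hσ.1.le)
    nlinarith [hσ.2]
  have := sub_mul_le_inner_sub_deriv hS hg hg' hM hs (hsub (Ioo_subset_Icc_self hσ)) hσ.1.le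
    (hunit σ) hw
  linarith

theorem exists_infDist_image_Ioo_eq_dist_left {L : ℝ} (hL : 0 < L) (hg : ContDiff ℝ 2 g)
    (hunit : ∀ s, ‖deriv g s‖ = 1) (hinj : InjOn g (Icc 0 L)) :
    ∃ α > 0, ∀ s ∈ Ioo (-α) 0, ∀ w : E, ‖w‖ < α → ⟪w, deriv g s⟫ = 0 →
      infDist (g s + w) (g '' Ioo 0 L) = dist (g s + w) (g 0) := by
  have hg₁ : Differentiable ℝ g := hg.differentiable (by norm_num)
  have hg₂ : ContDiff ℝ 1 (deriv g) := hg.iterate_deriv' 1 1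
  obtain ⟨M, hM⟩ := (isCompact_Icc (a := -1) (b := 1)).exists_bound_of_continuousOn
    (hg₂.continuous_deriv le_rfl).continuousOn
  have hM0 : 0 ≤ M := (norm_nonneg _).trans (hM 0 ⟨by norm_num, by norm_num⟩)
  set δ := min 1 (1 / (3 * M + 1))
  have hδ : 0 < δ := lt_min one_pos (by positivity)
  have hδ1 : δ ≤ 1 := min_le_left _ _
  have hδM : M * (3 * δ) ≤ 1 := by
    have : (3 * M + 1) * δ ≤ 1 := (le_div_iff₀' (by positivity)).mp (min_le_right _ _)
    nlinarith
  obtain ⟨ε, hε, hgap⟩ := exists_pos_le_dist_of_injOn hg₁.continuous hinj hδ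
  refine ⟨min δ (ε / 4), lt_min hδ (by positivity), fun s hs w hw hperp => ?_⟩
  have hαδ : min δ (ε / 4) ≤ δ := min_le_left _ _
  have hαε : min δ (ε / 4) ≤ ε / 4 := min_le_right _ _
  have hx : dist (g s + w) (g 0) < ε / 2 := by
    have hlip : ‖g s - g 0‖ ≤ 1 * ‖s - 0‖ := convex_univ.norm_image_sub_le_of_norm_deriv_le
      (fun x _ => hg₁ x) (fun x _ => (hunit x).le) trivial trivial
    rw [dist_eq_norm, add_sub_right_comm]
    calc ‖g s - g 0 + w‖ ≤ ‖g s - g 0‖ + ‖w‖ := norm_add_le _ _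
      _ < ε / 2 := by
        rw [one_mul, sub_zero, Real.norm_eq_abs, abs_of_neg hs.2] at hlip
        linarith [hs.1]
  have hclosure : g 0 ∈ closure (g '' Ioo 0 L) :=
    map_mem_closure hg₁.continuous (by rw [closure_Ioo hL.ne]; exact ⟨le_rfl, hL.le⟩)
      (mapsTo_image _ _)
  refine infDist_eq_dist_of_mem_closure hclosure ?_
  rintro _ ⟨σ, hσ, rfl⟩
  rcases le_total σ δ with hσδ | hδσ
  · have hmono := monotoneOn_norm_sub_sq (convex_Icc (-1) 1) hg₁ hg₂.differentiable_one
      hM hunit (Icc_subset_Icc (by linarith [hs.1]) hδ1) hperp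
      (by nlinarith [hs.1])
    have := hmono ⟨hs.2.le, hδ.le⟩ ⟨hs.2.le.trans hσ.1.le, hσδ⟩ hσ.1.le
    rw [dist_comm, dist_comm _ (g σ), dist_eq_norm, dist_eq_norm]
    exact pow_le_pow_iff_left₀ (norm_nonneg _) (norm_nonneg _) two_ne_zero |>.mp this
  · have := hgap σ ⟨hδσ, hσ.2.le⟩
    linarith [dist_triangle (g σ) (g s + w) (g 0), dist_comm (g σ) (g s + w)]

theorem exists_infDist_image_Ioo_eq_dist_right {L : ℝ} (hL : 0 < L) (hg : ContDiff ℝ 2 g)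
    (hunit : ∀ s, ‖deriv g s‖ = 1) (hinj : InjOn g (Icc 0 L)) :
    ∃ α > 0, ∀ s ∈ Ioo L (L + α), ∀ w : E, ‖w‖ < α → ⟪w, deriv g s⟫ = 0 →
      infDist (g s + w) (g '' Ioo 0 L) = dist (g s + w) (g L) := by
  have hflip : MapsTo (fun σ => L - σ) (Icc 0 L) (Icc 0 L) :=
    fun σ hσ => ⟨by linarith [hσ.2], by linarith [hσ.1]⟩
  have himage : (fun σ => g (L - σ)) '' Ioo 0 L = g '' Ioo 0 L := by
    rw [← image_image g (fun σ => L - σ), image_const_sub_Ioo, sub_self, sub_zero]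
  obtain ⟨α, hα, h⟩ := exists_infDist_image_Ioo_eq_dist_left (g := fun σ => g (L - σ)) hL
    (hg.comp (contDiff_const.sub contDiff_id))
    (fun σ => by rw [deriv_comp_const_sub, norm_neg, hunit])
    (hinj.comp (injOn_of_injective sub_right_injective) hflip)
  refine ⟨α, hα, fun s hs w hw hperp => ?_⟩
  have := h (L - s) ⟨by linarith [hs.2], by linarith [hs.1]⟩ w hw
    (by rw [deriv_comp_const_sub, sub_sub_cancel, inner_neg_right, hperp, neg_zero])
  rwa [himage, sub_sub_cancel, sub_zero] at this

end Curve

theorem inner_eq_zero_of_rotation {u w : EuclideanSpace ℝ (Fin 2)}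
    (h : w 0 = -u 1 ∧ w 1 = u 0) : ⟪w, u⟫ = 0 := by
  simp only [PiLp.inner_apply, RCLike.inner_apply, conj_trivial, Fin.sum_univ_two, h.1, h.2]
  ring

theorem norm_eq_of_rotation {u w : EuclideanSpace ℝ (Fin 2)}
    (h : w 0 = -u 1 ∧ w 1 = u 0) : ‖w‖ = ‖u‖ := by
  simp only [EuclideanSpace.norm_eq, Fin.sum_univ_two, h.1, h.2, norm_neg, add_comm]

theorem dist_to_arc_beyond_endpoints_general
    (L l₀ a₀ : ℝ) (hL : 0 < L) (hl₀ : 0 < l₀)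
    (Γ : ℝ → EuclideanSpace ℝ (Fin 2))
    (hΓ : ContDiff ℝ 4 Γ)
    (hunit : ∀ s, ‖deriv Γ s‖ = 1)
    (hinj : Set.InjOn Γ (Set.Icc (-l₀) (L + l₀)))
    (n : ℝ → EuclideanSpace ℝ (Fin 2))
    (hn : ∀ s, n s 0 = -(deriv Γ s 1) ∧ n s 1 = deriv Γ s 0)
    (Φ : ℝ × ℝ → EuclideanSpace ℝ (Fin 2))
    (hΦ : ∀ p : ℝ × ℝ, Φ p = Γ p.1 + p.2 • n p.1)
    (ha₀ : 0 < a₀) :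
    ∃ α, 0 < α ∧ α < a₀ ∧
      (∀ s t : ℝ, s ∈ Set.Ioo (-α) 0 → t ∈ Set.Ioo (-α) α →
        Metric.infDist (Φ (s, t)) (Γ '' Set.Ioo 0 L) = dist (Φ (s, t)) (Γ 0)) ∧
      (∀ s t : ℝ, s ∈ Set.Ioo L (L + α) → t ∈ Set.Ioo (-α) α →
        Metric.infDist (Φ (s, t)) (Γ '' Set.Ioo 0 L) = dist (Φ (s, t)) (Γ L)) := by
  have hΓ₂ : ContDiff ℝ 2 Γ := hΓ.of_le (by norm_num)
  have hinj₀ : InjOn Γ (Icc 0 L) :=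
    hinj.mono (Icc_subset_Icc (neg_nonpos.mpr hl₀.le) (le_add_of_nonneg_right hl₀.le))
  obtain ⟨α₁, hα₁, h₁⟩ := exists_infDist_image_Ioo_eq_dist_left hL hΓ₂ hunit hinj₀
  obtain ⟨α₂, hα₂, h₂⟩ := exists_infDist_image_Ioo_eq_dist_right hL hΓ₂ hunit hinj₀
  set α := min (min α₁ α₂) (a₀ / 2)
  have hαα₁ : α ≤ α₁ := (min_le_left _ _).trans (min_le_left _ _)
  have hαα₂ : α ≤ α₂ := (min_le_left _ _).trans (min_le_right _ _)
  have hnormal : ∀ s, ∀ t ∈ Ioo (-α) α, ‖t • n s‖ < α := fun s t ht => by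
    rw [norm_smul, norm_eq_of_rotation (hn s), hunit, mul_one, Real.norm_eq_abs]
    exact abs_lt.mpr ht
  have hperp : ∀ s t, ⟪t • n s, deriv Γ s⟫ = 0 := fun s t => by
    rw [real_inner_smul_left, inner_eq_zero_of_rotation (hn s), mul_zero]
  refine ⟨α, lt_min (lt_min hα₁ hα₂) (half_pos ha₀), (min_le_right _ _).trans_lt (half_lt_self ha₀),
    fun s t hs ht => ?_, fun s t hs ht => ?_⟩
  · rw [hΦ]
    exact h₁ s ⟨by linarith [hs.1], hs.2⟩ _ ((hnormal s t ht).trans_le hαα₁) (hperp s t)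
  · rw [hΦ]
    exact h₂ s ⟨hs.1, by linarith [hs.2]⟩ _ ((hnormal s t ht).trans_le hαα₂) (hperp s t)

theorem dist_to_arc_beyond_endpoints
    (L l₀ a₀ K : ℝ) (hL : 0 < L) (hl₀ : 0 < l₀)
    (Γ : ℝ → EuclideanSpace ℝ (Fin 2))
    (hΓ : ContDiff ℝ 4 Γ)
    (hunit : ∀ s, ‖deriv Γ s‖ = 1)
    (hinj : Set.InjOn Γ (Set.Icc (-l₀) (L + l₀)))
    (n : ℝ → EuclideanSpace ℝ (Fin 2))
    (hn : ∀ s, n s 0 = -(deriv Γ s 1) ∧ n s 1 = deriv Γ s 0)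
    (κ : ℝ → ℝ)
    (hκ : ∀ s, κ s = deriv Γ s 0 * deriv (deriv Γ) s 1 - deriv (deriv Γ) s 0 * deriv Γ s 1)
    (hK : ∀ s ∈ Set.Icc (-l₀) (L + l₀), |κ s| ≤ K)
    (Φ : ℝ × ℝ → EuclideanSpace ℝ (Fin 2))
    (hΦ : ∀ p : ℝ × ℝ, Φ p = Γ p.1 + p.2 • n p.1)
    (ha₀ : 0 < a₀) (ha₀K : 2 * K * a₀ < 1) (ha₀l : a₀ < l₀)
    (hdiff : Set.InjOn Φ (Set.Ioo (-a₀) (L + a₀) ×ˢ Set.Ioo (-a₀) a₀)) :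
    ∃ α, 0 < α ∧ α < a₀ ∧
      (∀ s t : ℝ, s ∈ Set.Ioo (-α) 0 → t ∈ Set.Ioo (-α) α →
        Metric.infDist (Φ (s, t)) (Γ '' Set.Ioo 0 L) = dist (Φ (s, t)) (Γ 0)) ∧
      (∀ s t : ℝ, s ∈ Set.Ioo L (L + α) → t ∈ Set.Ioo (-α) α →
        Metric.infDist (Φ (s, t)) (Γ '' Set.Ioo 0 L) = dist (Φ (s, t)) (Γ L)) :=
  dist_to_arc_beyond_endpoints_general L l₀ a₀ hL hl₀ Γ hΓ hunit hinj n hn Φ hΦ ha₀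
end

section
/- For $s<0$ and $(s,t)\to(0,0)$ one has the asymptotics $d(\Phi(s,t),\gamma)=\sqrt{s^2+t^2}+\mathcal{O}(s^2+t^2)$; more precisely there exist $\varepsilon>0$ and $C>0$ such that $|d(\Phi(s,t),\gamma)-\sqrt{s^2+t^2}|\le C(s^2+t^2)$ whenever $-\varepsilon<s<0$ and $|t|<\varepsilon$. -/
/-!
Write `r = √(s² + t²)`. In the orthonormal frame `(Γ'(s), n(s))`, Taylor's formula gives
`|Φ(s,t) - Γ(σ)| = √((σ - s)² + t²) + O((σ - s)²)` for `σ ≥ s`. At `σ = 0` this is the upper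
bound `r + O(r²)`. For the lower bound, arc points `Γ(σ)` with small `σ > 0` have `σ - s ≥ |s|`:
if `σ - s ≤ 2r` the error is `O(r²)`, and otherwise `√((σ - s)² + t²) ≥ σ - s` beats the
quadratic error by a margin larger than `r`. Arc points with `σ` bounded away from `0` stay at a
fixed positive distance from `Γ(0)` by injectivity and compactness, hence at distance `≥ r` from
`Φ(s,t)` once `r` is small.
-/

open Metric Set

namespace EuclideanSpace

variable {v w : EuclideanSpace ℝ (Fin 2)}

theorem norm_eq_of_quarterTurn (h0 : w 0 = -v 1) (h1 : w 1 = v 0) : ‖w‖ = ‖v‖ := by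
  simp only [EuclideanSpace.norm_eq, Fin.sum_univ_two, h0, h1, Real.norm_eq_abs, sq_abs, neg_sq,
    add_comm]

theorem inner_eq_zero_of_quarterTurn (h0 : w 0 = -v 1) (h1 : w 1 = v 0) : inner ℝ v w = 0 := by
  simp only [PiLp.inner_apply, RCLike.inner_apply, conj_trivial, Fin.sum_univ_two, h0, h1]
  ring

end EuclideanSpace

theorem sqrt_sub_mul_sq_le_sqrt_sub_mul_sq {M s t a : ℝ} (hM : 0 ≤ M) (hsa : |s| ≤ a)
    (hMa : 2 * M * a ≤ 1) :
    √(s ^ 2 + t ^ 2) - 4 * M * (s ^ 2 + t ^ 2) ≤ √(a ^ 2 + t ^ 2) - M * a ^ 2 := by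
  have ha : 0 ≤ a := (abs_nonneg s).trans hsa
  have hr2 : √(s ^ 2 + t ^ 2) ^ 2 = s ^ 2 + t ^ 2 := Real.sq_sqrt (by positivity)
  have hrρ : √(s ^ 2 + t ^ 2) ≤ √(a ^ 2 + t ^ 2) :=
    Real.sqrt_le_sqrt (by nlinarith [sq_le_sq' (neg_le_of_abs_le hsa) (le_of_abs_le hsa)])
  have haρ : a ≤ √(a ^ 2 + t ^ 2) := (Real.le_sqrt ha (by positivity)).2 (by nlinarith)
  rcases le_or_gt a (2 * √(s ^ 2 + t ^ 2)) with hclose | hfar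
  · have : M * a ^ 2 ≤ M * (4 * (s ^ 2 + t ^ 2)) :=
      mul_le_mul_of_nonneg_left (by nlinarith [Real.sqrt_nonneg (s ^ 2 + t ^ 2)]) hM
    linarith
  · nlinarith

theorem exists_pos_le_dist_of_injOn_s5 {α X : Type*} [PseudoMetricSpace α] [MetricSpace X]
    {f : α → X} {K : Set α} {x : α} {δ : ℝ} (hK : IsCompact K) (hf : ContinuousOn f K)
    (hinj : InjOn f K) (hx : x ∈ K) (hδ : 0 < δ) :
    ∃ m > 0, ∀ y ∈ K, δ ≤ dist y x → m ≤ dist (f x) (f y) := by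
  set K' := K ∩ {y | δ ≤ dist y x}
  have hK' : IsCompact K' :=
    hK.inter_right (isClosed_le continuous_const (continuous_id.dist continuous_const))
  rcases K'.eq_empty_or_nonempty with hempty | hne
  · exact ⟨1, one_pos, fun y hy hδy => (hempty.subset (⟨hy, hδy⟩ : y ∈ K')).elim⟩
  obtain ⟨y₀, ⟨hy₀, hy₀δ⟩, hmin⟩ := hK'.exists_isMinOn hne
    ((continuous_const.dist continuous_id).comp_continuousOn (hf.mono inter_subset_left))
  refine ⟨dist (f x) (f y₀), dist_pos.2 fun h => ?_, fun y hy hδy =>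
    isMinOn_iff.1 hmin y ⟨hy, hδy⟩⟩
  have : δ ≤ dist y₀ x := hy₀δ
  rw [← hinj hx hy₀ h, dist_self] at this
  linarith

section Curve

variable {E : Type*} [NormedAddCommGroup E] {f : ℝ → E}

theorem norm_sub_sub_smul_deriv_le_s5 [NormedSpace ℝ E] (hf : Differentiable ℝ f)
    (hf' : Differentiable ℝ (deriv f)) {M s σ : ℝ} (hM : ∀ u ∈ Icc s σ, ‖deriv (deriv f) u‖ ≤ M) (hsσ : s ≤ σ) :
    ‖f σ - f s - (σ - s) • deriv f s‖ ≤ M * (σ - s) ^ 2 := by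
  have hderiv : ∀ u ∈ Icc s σ, ‖deriv f u - deriv f s‖ ≤ M * (u - s) :=
    norm_image_sub_le_of_norm_deriv_le_segment'
      (fun u _ => (hf' u).hasDerivAt.hasDerivWithinAt) fun u hu => hM u (Ico_subset_Icc_self hu)
  have hrem := norm_image_sub_le_of_norm_deriv_le_segment' (C := M * (σ - s))
    (f := fun u => f u - u • deriv f s)
    (fun u _ => ((hf u).hasDerivAt.sub ((hasDerivAt_id u).smul_const (deriv f s))).hasDerivWithinAt)
    (fun u hu => by
      simpa using (hderiv u (Ico_subset_Icc_self hu)).trans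
        (mul_le_mul_of_nonneg_left (by linarith [hu.2])
          ((norm_nonneg _).trans (hM s ⟨le_rfl, hsσ⟩))))
    σ (right_mem_Icc.2 hsσ)
  calc ‖f σ - f s - (σ - s) • deriv f s‖
      = ‖f σ - σ • deriv f s - (f s - s • deriv f s)‖ := by rw [sub_smul]; congr 1; abel
    _ ≤ M * (σ - s) * (σ - s) := hrem
    _ = M * (σ - s) ^ 2 := by ring

variable [InnerProductSpace ℝ E]

theorem norm_smul_sub_smul_of_orthonormal {T N : E} (hT : ‖T‖ = 1) (hN : ‖N‖ = 1)
    (hTN : inner ℝ T N = 0) (a t : ℝ) : ‖t • N - a • T‖ = √(a ^ 2 + t ^ 2) := by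
  have horth : inner ℝ (t • N) (a • T) = (0 : ℝ) := by
    rw [real_inner_smul_left, real_inner_smul_right, real_inner_comm, hTN, mul_zero, mul_zero]
  rw [← Real.sqrt_sq (norm_nonneg _), norm_sub_sq_real, horth, norm_smul, norm_smul, hT, hN,
    Real.norm_eq_abs, Real.norm_eq_abs, mul_one, mul_one, sq_abs, sq_abs, mul_zero, sub_zero,
    add_comm]

theorem abs_dist_sub_sqrt_le (hf : Differentiable ℝ f) (hf' : Differentiable ℝ (deriv f))
    {N : E} {M s σ : ℝ} (hT : ‖deriv f s‖ = 1) (hN : ‖N‖ = 1) (hTN : inner ℝ (deriv f s) N = 0)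
    (hM : ∀ u ∈ Icc s σ, ‖deriv (deriv f) u‖ ≤ M) (hsσ : s ≤ σ) (t : ℝ) :
    |dist (f s + t • N) (f σ) - √((σ - s) ^ 2 + t ^ 2)| ≤ M * (σ - s) ^ 2 := by
  rw [dist_eq_norm, ← norm_smul_sub_smul_of_orthonormal hT hN hTN]
  calc |‖f s + t • N - f σ‖ - ‖t • N - (σ - s) • deriv f s‖|
      ≤ ‖f s + t • N - f σ - (t • N - (σ - s) • deriv f s)‖ := abs_norm_sub_norm_le _ _
    _ = ‖f σ - f s - (σ - s) • deriv f s‖ := by rw [← norm_neg]; congr 1; abel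
    _ ≤ M * (σ - s) ^ 2 := norm_sub_sub_smul_deriv_le_s5 hf hf' hM hsσ

theorem abs_infDist_image_sub_sqrt_le (hf : Differentiable ℝ f)
    (hf' : Differentiable ℝ (deriv f)) {N : E} {L M δ m s t : ℝ} (hT : ‖deriv f s‖ = 1)
    (hN : ‖N‖ = 1) (hTN : inner ℝ (deriv f s) N = 0)
    (hM : ∀ u ∈ Icc s L, ‖deriv (deriv f) u‖ ≤ M) (hMδ : 4 * M * δ ≤ 1)
    (hm : ∀ σ ∈ Icc 0 L, δ ≤ dist σ 0 → m ≤ dist (f 0) (f σ)) (hL : 0 < L) (hs : s < 0)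
    (hsδ : -s ≤ δ) (hmr : 2 * √(s ^ 2 + t ^ 2) ≤ m) :
    |infDist (f s + t • N) (f '' Ioo 0 L) - √(s ^ 2 + t ^ 2)| ≤ 4 * M * (s ^ 2 + t ^ 2) := by
  have hM0 : 0 ≤ M := (norm_nonneg _).trans (hM s ⟨le_rfl, by linarith⟩)
  have hquad : 0 ≤ M * (s ^ 2 + t ^ 2) := by positivity
  have hdist (σ : ℝ) (hσ : σ ∈ Icc 0 L) :
      |dist (f s + t • N) (f σ) - √((σ - s) ^ 2 + t ^ 2)| ≤ M * (σ - s) ^ 2 :=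
    abs_dist_sub_sqrt_le hf hf' hT hN hTN (fun u hu => hM u ⟨hu.1, hu.2.trans hσ.2⟩)
      (by linarith [hσ.1]) t
  have hend : dist (f s + t • N) (f 0) ≤ √(s ^ 2 + t ^ 2) + M * (s ^ 2 + t ^ 2) := by
    have h := (abs_le.1 (hdist 0 ⟨le_rfl, hL.le⟩)).2
    rw [zero_sub, neg_sq] at h
    nlinarith
  rw [abs_le]
  constructor
  · suffices √(s ^ 2 + t ^ 2) - 4 * M * (s ^ 2 + t ^ 2) ≤ infDist (f s + t • N) (f '' Ioo 0 L) by
      linarith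
    refine (le_infDist ((nonempty_Ioo.2 hL).image f)).2 ?_
    rintro _ ⟨σ, hσ, rfl⟩
    rcases lt_or_ge σ δ with hnear | hfar
    · have h := (abs_le.1 (hdist σ (Ioo_subset_Icc_self hσ))).1
      have hs' : |s| ≤ σ - s := by rw [abs_of_neg hs]; linarith [hσ.1]
      linarith [sqrt_sub_mul_sq_le_sqrt_sub_mul_sq hM0 hs' (t := t) (by nlinarith)]
    · have hsep := hm σ (Ioo_subset_Icc_self hσ) (by rwa [Real.dist_0_eq_abs, abs_of_pos hσ.1])
      linarith [dist_triangle_left (f 0) (f σ) (f s + t • N)]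
  · have hf0 : f 0 ∈ closure (f '' Ioo 0 L) :=
      image_closure_subset_closure_image hf.continuous
        ⟨0, by rw [closure_Ioo hL.ne]; exact ⟨le_rfl, hL.le⟩, rfl⟩
    rw [← infDist_closure]
    linarith [infDist_le_dist_of_mem hf0 (x := f s + t • N)]

end Curve

theorem dist_to_arc_asymptotics_at_endpoint_general
    (L l₀ : ℝ) (hL : 0 < L) (hl₀ : 0 < l₀)
    (Γ : ℝ → EuclideanSpace ℝ (Fin 2))
    (hΓ : ContDiff ℝ 4 Γ)
    (hunit : ∀ s, ‖deriv Γ s‖ = 1)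
    (hinj : Set.InjOn Γ (Set.Icc (-l₀) (L + l₀)))
    (n : ℝ → EuclideanSpace ℝ (Fin 2))
    (hn : ∀ s, n s 0 = -(deriv Γ s 1) ∧ n s 1 = deriv Γ s 0)
    (Φ : ℝ × ℝ → EuclideanSpace ℝ (Fin 2))
    (hΦ : ∀ p : ℝ × ℝ, Φ p = Γ p.1 + p.2 • n p.1) :
    ∃ ε > 0, ∃ C > 0, ∀ s t : ℝ, -ε < s → s < 0 → |t| < ε →
      |Metric.infDist (Φ (s, t)) (Γ '' Set.Ioo 0 L) - Real.sqrt (s ^ 2 + t ^ 2)|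
        ≤ C * (s ^ 2 + t ^ 2) := by
  have hΓ2 : ContDiff ℝ (1 + 1) Γ := hΓ.of_le (by norm_num)
  obtain ⟨B, hB⟩ := (isCompact_Icc : IsCompact (Icc (-l₀) L)).exists_bound_of_continuousOn
    (hΓ2.deriv'.continuous_deriv le_rfl).continuousOn
  set M := max B 1
  have hM0 : 0 < M := lt_max_of_lt_right one_pos
  obtain ⟨m, hm0, hm⟩ := exists_pos_le_dist_of_injOn_s5 (isCompact_Icc : IsCompact (Icc 0 L))
    hΓ.continuous.continuousOn (hinj.mono (Icc_subset_Icc (by linarith) (by linarith)))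
    ⟨le_rfl, hL.le⟩ (by positivity : 0 < (4 * M)⁻¹)
  refine ⟨min l₀ (min ((4 * M)⁻¹) (m / 4)), by positivity, 4 * M, by positivity,
    fun s t hs hs0 ht => ?_⟩
  set ε := min l₀ (min ((4 * M)⁻¹) (m / 4))
  have hε : 0 < ε := by positivity
  have hr : √(s ^ 2 + t ^ 2) < 2 * ε := by
    have : s ^ 2 < ε ^ 2 := by nlinarith
    have : t ^ 2 < ε ^ 2 := by nlinarith [abs_lt.1 ht]
    exact (Real.sqrt_lt' (by positivity)).2 (by nlinarith)
  have hεl : ε ≤ l₀ := min_le_left _ _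
  have hεδ : ε ≤ (4 * M)⁻¹ := (min_le_right _ _).trans (min_le_left _ _)
  have hεm : ε ≤ m / 4 := (min_le_right _ _).trans (min_le_right _ _)
  have hM : ∀ u ∈ Icc s L, ‖deriv (deriv Γ) u‖ ≤ M := fun u hu =>
    (hB u ⟨by linarith [hu.1], hu.2⟩).trans (le_max_left _ _)
  rw [hΦ]
  exact abs_infDist_image_sub_sqrt_le (hΓ2.differentiable (by norm_num))
    hΓ2.differentiable_deriv_two (hunit s)
    ((EuclideanSpace.norm_eq_of_quarterTurn (hn s).1 (hn s).2).trans (hunit s))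
    (EuclideanSpace.inner_eq_zero_of_quarterTurn (hn s).1 (hn s).2) hM
    (mul_inv_cancel₀ (by positivity)).le hm hL hs0 (by linarith) (by linarith)

theorem dist_to_arc_asymptotics_at_endpoint
    (L l₀ a₀ K : ℝ) (hL : 0 < L) (hl₀ : 0 < l₀)
    (Γ : ℝ → EuclideanSpace ℝ (Fin 2))
    (hΓ : ContDiff ℝ 4 Γ)
    (hunit : ∀ s, ‖deriv Γ s‖ = 1)
    (hinj : Set.InjOn Γ (Set.Icc (-l₀) (L + l₀)))
    (n : ℝ → EuclideanSpace ℝ (Fin 2))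
    (hn : ∀ s, n s 0 = -(deriv Γ s 1) ∧ n s 1 = deriv Γ s 0)
    (κ : ℝ → ℝ)
    (hκ : ∀ s, κ s = deriv Γ s 0 * deriv (deriv Γ) s 1 - deriv (deriv Γ) s 0 * deriv Γ s 1)
    (hK : ∀ s ∈ Set.Icc (-l₀) (L + l₀), |κ s| ≤ K)
    (Φ : ℝ × ℝ → EuclideanSpace ℝ (Fin 2))
    (hΦ : ∀ p : ℝ × ℝ, Φ p = Γ p.1 + p.2 • n p.1)
    (ha₀ : 0 < a₀) (ha₀K : 2 * K * a₀ < 1) (ha₀l : a₀ < l₀)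
    (hdiff : Set.InjOn Φ (Set.Ioo (-a₀) (L + a₀) ×ˢ Set.Ioo (-a₀) a₀)) :
    ∃ ε > 0, ∃ C > 0, ∀ s t : ℝ, -ε < s → s < 0 → |t| < ε →
      |Metric.infDist (Φ (s, t)) (Γ '' Set.Ioo 0 L) - Real.sqrt (s ^ 2 + t ^ 2)|
        ≤ C * (s ^ 2 + t ^ 2) :=
  dist_to_arc_asymptotics_at_endpoint_general L l₀ hL hl₀ Γ hΓ hunit hinj n hn Φ hΦ
end
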